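/- Let 0<β<1, u_k=((1+k)/(1+β))^{1/β}, and d_β a suitable constant. Then ∑_{k=1}^{m} u_k = β·((1+m)/(1+β))^{(1+β)/β} + u_m/2 + d_β·u_m^{1−β}·(1+o(1)) as m→∞; that is, the partial sums of the lattice logarithms admit the three-term asymptotic expansion with leading term β((1+m)/(1+β))^{(1+β)/β}. -/

import Mathlib

/-!
Euler–Maclaurin to second order, via Stolz–Cesàro. Writing `p = 1/β > 1` and scaling out the
factor `(1 + β) ^ p`, the quotient becomes `(1 + β)⁻¹` times
`(∑_{k=1}^m (1 + k) ^ p - x ^ (p + 1) / (p + 1) - x ^ p / 2) / x ^ (p - 1)` with `x = 1 + m`,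
which tends to `p / 12`; hence `d_β = 1 / (12 β (1 + β))`. The Stolz quotient of consecutive
differences is, in the variable `t = 1 / x`, the trapezoid-rule error of `s ↦ (1 - s) ^ p` on
`[0, t]` divided by `t ^ 3` (tending to `p (p - 1) / 12` by l'Hôpital twice, the second derivative
being `p (p - 1)`), over `(1 - (1 - t) ^ (p - 1)) / t → p - 1`.
-/

open Filter

noncomputable def u (β : ℝ) (k : ℕ) : ℝ := ((1 + k : ℝ) / (1 + β)) ^ (1 / β)

open Topology Set Asymptotics

theorem tendsto_div_of_tendsto_sub_div_sub {a b : ℕ → ℝ} {l : ℝ} (hb : StrictMono b)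
    (hb_top : Tendsto b atTop atTop)
    (h : Tendsto (fun n => (a (n + 1) - a n) / (b (n + 1) - b n)) atTop (𝓝 l)) :
    Tendsto (fun n => a n / b n) atTop (𝓝 l) := by
  set c := fun n => a n - l * b n
  have hΔb : ∀ n, 0 < b (n + 1) - b n := fun n => sub_pos.2 (hb n.lt_succ_self)
  have hstep : (fun n => c (n + 1) - c n) =o[atTop] fun n => b (n + 1) - b n := by
    rw [isLittleO_iff_tendsto fun n h => absurd h (hΔb n).ne', ← sub_self l]
    refine (h.sub_const l).congr fun n => ?_
    field_simp [(hΔb n).ne']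
    ring
  have hsum := hstep.sum_range (fun n => (hΔb n).le) <| by
    simpa only [Finset.sum_range_sub, ← sub_eq_add_neg]
      using tendsto_atTop_add_const_right _ (-b 0) hb_top
  simp only [Finset.sum_range_sub] at hsum
  have hconst : ∀ x : ℝ, (fun _ => x) =o[atTop] b := fun x =>
    isLittleO_const_left.2 (Or.inr (tendsto_norm_atTop_atTop.comp hb_top))
  have hc : c =o[atTop] b :=
    ((hsum.trans_isBigO ((isBigO_refl b _).sub (hconst _).isBigO)).add
      (hconst (c 0))).congr_left fun n => by ring
  rw [← zero_add l]
  refine (hc.tendsto_div_nhds_zero.add_const l).congr' ?_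
  filter_upwards [hb_top.eventually_ne_atTop 0] with n hn
  field_simp
  ring

theorem tendsto_trapezoid_error_div_cube {F f f' f'' : ℝ → ℝ} {a L : ℝ} (ha : 0 < a)
    (hF : ∀ t ∈ Ico 0 a, HasDerivAt F (f t) t) (hf : ∀ t ∈ Ico 0 a, HasDerivAt f (f' t) t)
    (hf' : ∀ t ∈ Ico 0 a, HasDerivAt f' (f'' t) t) (hf'' : Tendsto f'' (𝓝[>] 0) (𝓝 L)) :
    Tendsto (fun t => (t * (f 0 + f t) / 2 - (F t - F 0)) / t ^ 3) (𝓝[>] 0) (𝓝 (L / 12)) := by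
  have h0 : (0 : ℝ) ∈ Ico 0 a := ⟨le_rfl, ha⟩
  have hsub : Ioo 0 a ⊆ Ico 0 a := Ioo_subset_Ico_self
  have hvanish : ∀ {φ : ℝ → ℝ}, ContinuousAt φ 0 → φ 0 = 0 → Tendsto φ (𝓝[>] 0) (𝓝 0) :=
    fun hφ hφ0 => by
      simpa only [hφ0] using hφ.tendsto.mono_left (nhdsWithin_le_nhds (s := Ioi 0))
  have hg' : ∀ t ∈ Ico 0 a, HasDerivAt (fun t => t * (f 0 + f t) / 2 - (F t - F 0))
      ((f 0 - f t) / 2 + t * f' t / 2) t := fun t ht =>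
    ((((hasDerivAt_id t).mul ((hf t ht).const_add (f 0))).div_const 2).sub
      ((hF t ht).sub_const (F 0))).congr_deriv (by simp only [id]; ring)
  have hg'' : ∀ t ∈ Ico 0 a, HasDerivAt (fun t => (f 0 - f t) / 2 + t * f' t / 2)
      (t * f'' t / 2) t := fun t ht =>
    ((((hf t ht).const_sub (f 0)).div_const 2).add
      (((hasDerivAt_id t).mul (hf' t ht)).div_const 2)).congr_deriv
        (by simp only [id]; ring)
  have hcube : ∀ t, HasDerivAt (fun t : ℝ => t ^ 3) (3 * t ^ 2) t := fun t => by
    simpa using hasDerivAt_pow 3 t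
  have hsq : ∀ t, HasDerivAt (fun t : ℝ => 3 * t ^ 2) (6 * t) t := fun t =>
    ((hasDerivAt_pow 2 t).const_mul 3).congr_deriv (by norm_num; ring)
  have hlast : Tendsto (fun t => t * f'' t / 2 / (6 * t)) (𝓝[>] 0) (𝓝 (L / 12)) :=
    (hf''.div_const 12).congr' <| eventually_nhdsWithin_of_forall fun t (ht : 0 < t) => by
      field_simp
      ring
  refine HasDerivAt.lhopital_zero_right_on_Ioo ha (fun t ht => hg' t (hsub ht))
    (fun t _ => hcube t) (fun t ht => by have := ht.1; positivity)
    (hvanish (hg' 0 h0).continuousAt (by simp)) (hvanish (by fun_prop) (by simp)) ?_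
  exact HasDerivAt.lhopital_zero_right_on_Ioo ha (fun t ht => hg'' t (hsub ht))
    (fun t _ => hsq t) (fun t ht => by have := ht.1; positivity)
    (hvanish (hg'' 0 h0).continuousAt (by simp)) (hvanish (by fun_prop) (by simp)) hlast

theorem hasDerivAt_one_sub_rpow (q : ℝ) {t : ℝ} (ht : t < 1) :
    HasDerivAt (fun s => (1 - s) ^ q) (-(q * (1 - t) ^ (q - 1))) t :=
  (((hasDerivAt_id t).const_sub 1).rpow_const (Or.inl (sub_ne_zero.2 ht.ne'))).congr_deriv
    (by simp)

theorem tendsto_one_sub_rpow_trapezoid_error {p : ℝ} (hp : p + 1 ≠ 0) :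
    Tendsto (fun t => (t * (1 + (1 - t) ^ p) / 2 - (1 - (1 - t) ^ (p + 1)) / (p + 1)) / t ^ 3)
      (𝓝[>] 0) (𝓝 (p * (p - 1) / 12)) := by
  have hF : ∀ t ∈ Ico (0 : ℝ) 1, HasDerivAt (fun s => -(1 - s) ^ (p + 1) / (p + 1))
      ((1 - t) ^ p) t := fun t ht =>
    ((hasDerivAt_one_sub_rpow (p + 1) ht.2).neg.div_const _).congr_deriv (by field_simp; simp)
  have hf : ∀ t ∈ Ico (0 : ℝ) 1, HasDerivAt (fun s => (1 - s) ^ p)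
      (-(p * (1 - t) ^ (p - 1))) t := fun t ht => hasDerivAt_one_sub_rpow p ht.2
  have hf' : ∀ t ∈ Ico (0 : ℝ) 1, HasDerivAt (fun s => -(p * (1 - s) ^ (p - 1)))
      (p * (p - 1) * (1 - t) ^ (p - 2)) t := fun t ht =>
    ((hasDerivAt_one_sub_rpow (p - 1) ht.2).const_mul p).neg.congr_deriv (by ring_nf)
  have hf'' : Tendsto (fun s : ℝ => p * (p - 1) * (1 - s) ^ (p - 2)) (𝓝[>] 0)
      (𝓝 (p * (p - 1))) := by
    have : ContinuousAt (fun s : ℝ => p * (p - 1) * (1 - s) ^ (p - 2)) 0 :=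
      continuousAt_const.mul ((Real.continuousAt_rpow_const _ _ (by norm_num)).comp
        (continuousAt_const.sub continuousAt_id))
    simpa using this.tendsto.mono_left nhdsWithin_le_nhds
  convert tendsto_trapezoid_error_div_cube one_pos hF hf hf' hf'' using 3 with t
  simp only [sub_zero, Real.one_rpow]
  field_simp
  ring

theorem tendsto_one_sub_one_sub_rpow_div (q : ℝ) :
    Tendsto (fun t => (1 - (1 - t) ^ q) / t) (𝓝[>] 0) (𝓝 q) := by
  have hderiv : HasDerivAt (fun t => 1 - (1 - t) ^ q) q 0 := by
    simpa using (hasDerivAt_one_sub_rpow q one_pos).const_sub 1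
  refine ((hasDerivAt_iff_tendsto_slope.1 hderiv).mono_left
    (nhdsWithin_mono 0 fun t (ht : 0 < t) => ht.ne')).congr fun t => ?_
  simp [slope_def_field]

theorem sub_one_rpow_eq {x : ℝ} (hx : 1 ≤ x) (q : ℝ) :
    (x - 1) ^ q = x ^ q * (1 - x⁻¹) ^ q := by
  rw [← Real.mul_rpow (by linarith) (sub_nonneg.2 (inv_le_one_of_one_le₀ hx)), mul_one_sub,
    mul_inv_cancel₀ (by positivity)]

/-- With `t = x⁻¹`, the numerator is `x ^ (p + 1)` times the trapezoid-rule error of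
`s ↦ (1 - s) ^ p` on `[0, t]`, and the denominator is `x ^ (p - 1) * (1 - (1 - t) ^ (p - 1))`. -/
theorem rpow_step_ratio_eq {x : ℝ} (hx : 1 ≤ x) (p : ℝ) :
    (x ^ p - (x ^ (p + 1) - (x - 1) ^ (p + 1)) / (p + 1) - (x ^ p - (x - 1) ^ p) / 2) /
        (x ^ (p - 1) - (x - 1) ^ (p - 1)) =
      (x⁻¹ * (1 + (1 - x⁻¹) ^ p) / 2 - (1 - (1 - x⁻¹) ^ (p + 1)) / (p + 1)) / x⁻¹ ^ 3 /
        ((1 - (1 - x⁻¹) ^ (p - 1)) / x⁻¹) := by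
  have hx0 : 0 < x := by linarith
  have hp : x ^ p = x ^ (p - 1) * x := by rw [← Real.rpow_add_one hx0.ne', sub_add_cancel]
  have hp1 : x ^ (p + 1) = x ^ (p - 1) * x ^ 2 := by
    rw [Real.rpow_add_one hx0.ne', hp]; ring
  have hX : 0 < x ^ (p - 1) := by positivity
  simp only [sub_one_rpow_eq hx, hp, hp1]
  field_simp
  ring

theorem tendsto_sum_rpow_sub_div {p a : ℝ} (hp : 1 < p) (ha : 0 ≤ a) :
    Tendsto (fun m : ℕ => (∑ k ∈ Finset.Icc 1 m, (a + k) ^ p - (a + m) ^ (p + 1) / (p + 1) -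
      (a + m) ^ p / 2) / (a + m) ^ (p - 1)) atTop (𝓝 (p / 12)) := by
  have hb : StrictMono fun m : ℕ => (a + m) ^ (p - 1) := strictMono_nat_of_lt_succ fun m =>
    Real.rpow_lt_rpow (by positivity) (by push_cast; linarith) (by linarith)
  have hb_top : Tendsto (fun m : ℕ => (a + m) ^ (p - 1)) atTop atTop :=
    (tendsto_rpow_atTop (by linarith)).comp
      (tendsto_atTop_add_const_left _ a tendsto_natCast_atTop_atTop)
  refine tendsto_div_of_tendsto_sub_div_sub hb hb_top ?_
  have hratio := (tendsto_one_sub_rpow_trapezoid_error (p := p) (by linarith)).div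
    (tendsto_one_sub_one_sub_rpow_div (p - 1)) (by linarith)
  have hinv : Tendsto (fun m : ℕ => (a + m + 1)⁻¹) atTop (𝓝[>] 0) :=
    tendsto_inv_atTop_nhdsGT_zero.comp <| tendsto_atTop_add_const_right _ 1 <|
      tendsto_atTop_add_const_left _ a tendsto_natCast_atTop_atTop
  convert (hratio.comp hinv) using 1
  · ext m
    have hx : 1 ≤ a + m + 1 := by linarith [m.cast_nonneg (α := ℝ)]
    rw [Function.comp_apply, Pi.div_apply, ← rpow_step_ratio_eq hx p,
      Finset.sum_Icc_succ_top (by omega), add_sub_cancel_right]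
    push_cast
    ring_nf
  · field_simp [show p - 1 ≠ 0 by linarith]

theorem u_sum_sub_div_eq {β : ℝ} (hβ : 0 < β) (m : ℕ) :
    ((∑ k ∈ Finset.Icc 1 m, u β k) - β * ((1 + m : ℝ) / (1 + β)) ^ ((1 + β) / β) - u β m / 2) /
        (u β m) ^ (1 - β) =
      (∑ k ∈ Finset.Icc 1 m, (1 + k : ℝ) ^ (1 / β) - (1 + m : ℝ) ^ (1 / β + 1) / (1 / β + 1) -
            (1 + m : ℝ) ^ (1 / β) / 2) / (1 + m : ℝ) ^ (1 / β - 1) / (1 + β) := by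
  have hc : 0 < 1 + β := by linarith
  have hu : ∀ k : ℕ, u β k = (1 + k : ℝ) ^ (1 / β) / (1 + β) ^ (1 / β) := fun k =>
    Real.div_rpow (by positivity) hc.le _
  have hu_rpow : u β m ^ (1 - β) = (1 + m : ℝ) ^ (1 / β - 1) / (1 + β) ^ (1 / β - 1) := by
    rw [u, ← Real.rpow_mul (by positivity), Real.div_rpow (by positivity) hc.le]
    congr 2 <;> field_simp
  rw [hu_rpow, show (1 + β) / β = 1 / β + 1 by field_simp,
    Real.div_rpow (by positivity) hc.le, Real.rpow_add_one hc.ne', Real.rpow_sub_one hc.ne']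
  simp only [hu, ← Finset.sum_div]
  have : 0 < (1 + β) ^ (1 / β) := by positivity
  have : 0 < (1 + (m : ℝ)) ^ (1 / β - 1) := by positivity
  field_simp

theorem lattice_log_sum_expansion (β : ℝ) (hβ0 : 0 < β) (hβ1 : β < 1) :
    ∃ d : ℝ, Tendsto (fun m : ℕ =>
        ((∑ k ∈ Finset.Icc 1 m, u β k) -
            β * ((1 + m : ℝ) / (1 + β)) ^ ((1 + β) / β) - u β m / 2) /
          (u β m) ^ (1 - β))
      atTop (nhds d) := by
  have hp : 1 < 1 / β := by rw [lt_div_iff₀ hβ0]; linarith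
  refine ⟨1 / (12 * β * (1 + β)), ?_⟩
  simp only [u_sum_sub_div_eq hβ0]
  convert (tendsto_sum_rpow_sub_div hp zero_le_one).div_const (1 + β) using 2
  field_simp
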